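/- arXiv:2106.12931 — 2 statements merged into one kernel-verified Lean document; each statement's English description precedes it below -/
import Mathlib

section
/- Let H_0 ∈ ℝ^{N×T×F} be a third-order tensor and B1 ∈ ℝ^{N×N}, B2 ∈ ℝ^{T×T}, B3 ∈ ℝ^{F×F} square matrices. Define H(t) = H_0 ×_1 exp(tB1) ×_2 exp(tB2) ×_3 exp(tB3) + ∫_0^t H_0 ×_1 exp((t−s)B1) ×_2 exp((t−s)B2) ×_3 exp((t−s)B3) ds. Then H(0) = H_0, H is differentiable, and H satisfies dH(t)/dt = H(t) ×_1 B1 + H(t) ×_2 B2 + H(t) ×_3 B3 + H_0 for all t ∈ ℝ. -/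
/-!
Write `E(τ) = H₀ ×₁ e^{τB₁} ×₂ e^{τB₂} ×₃ e^{τB₃}` and `L X = X ×₁ B₁ + X ×₂ B₂ + X ×₃ B₃`.
Since mode products along different modes commute and `(e^{τB})' = e^{τB} B`, the product rule
gives `E' = L E` with `E(0) = H₀`. After the substitution `s ↦ t - s`,
`H(t) = E(t) + ∫₀ᵗ E`, so `H' = L E + E`, while by the fundamental theorem of calculus
`L ∫₀ᵗ E = ∫₀ᵗ E' = E(t) - H₀`; hence `H' = L H + H₀`.
-/

open scoped BigOperators
open Matrix intervalIntegral

noncomputable section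

/-- Mode-1 product of a third-order tensor with a matrix. -/
def tmul1 {n1 n2 n3 m : ℕ} (T : Fin n1 → Fin n2 → Fin n3 → ℝ)
    (M : Matrix (Fin n1) (Fin m) ℝ) : Fin m → Fin n2 → Fin n3 → ℝ :=
  fun l j k => ∑ i, T i j k * M i l

/-- Mode-2 product of a third-order tensor with a matrix. -/
def tmul2 {n1 n2 n3 m : ℕ} (T : Fin n1 → Fin n2 → Fin n3 → ℝ)
    (M : Matrix (Fin n2) (Fin m) ℝ) : Fin n1 → Fin m → Fin n3 → ℝ :=
  fun i l k => ∑ j, T i j k * M j l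

/-- Mode-3 product of a third-order tensor with a matrix. -/
def tmul3 {n1 n2 n3 m : ℕ} (T : Fin n1 → Fin n2 → Fin n3 → ℝ)
    (M : Matrix (Fin n3) (Fin m) ℝ) : Fin n1 → Fin n2 → Fin m → ℝ :=
  fun i j l => ∑ k, T i j k * M k l

/-- `H₀ ×₁ exp(τB₁) ×₂ exp(τB₂) ×₃ exp(τB₃)`. -/
def expTensor {N T F : ℕ} (H0 : Fin N → Fin T → Fin F → ℝ)
    (B1 : Matrix (Fin N) (Fin N) ℝ) (B2 : Matrix (Fin T) (Fin T) ℝ)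
    (B3 : Matrix (Fin F) (Fin F) ℝ) (τ : ℝ) : Fin N → Fin T → Fin F → ℝ :=
  tmul3 (tmul2 (tmul1 H0 (NormedSpace.exp (τ • B1)))
    (NormedSpace.exp (τ • B2))) (NormedSpace.exp (τ • B3))

/-- The analytic solution
`H(t) = H₀ ×₁ e^{tB₁} ×₂ e^{tB₂} ×₃ e^{tB₃}
  + ∫₀^t H₀ ×₁ e^{(t−s)B₁} ×₂ e^{(t−s)B₂} ×₃ e^{(t−s)B₃} ds` (entrywise). -/
def solTensor {N T F : ℕ} (H0 : Fin N → Fin T → Fin F → ℝ)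
    (B1 : Matrix (Fin N) (Fin N) ℝ) (B2 : Matrix (Fin T) (Fin T) ℝ)
    (B3 : Matrix (Fin F) (Fin F) ℝ) (t : ℝ) : Fin N → Fin T → Fin F → ℝ :=
  expTensor H0 B1 B2 B3 t +
    fun i j k => ∫ s in (0:ℝ)..t, expTensor H0 B1 B2 B3 (t - s) i j k

section TensorAlgebra

variable {n1 n2 n3 : ℕ}

lemma tmul1_tmul1 {m p : ℕ} (X : Fin n1 → Fin n2 → Fin n3 → ℝ)
    (M : Matrix (Fin n1) (Fin m) ℝ) (M' : Matrix (Fin m) (Fin p) ℝ) :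
    tmul1 (tmul1 X M) M' = tmul1 X (M * M') := by
  funext l j k
  simp only [tmul1, Matrix.mul_apply, Finset.sum_mul, Finset.mul_sum, mul_assoc]
  exact Finset.sum_comm

lemma tmul2_tmul2 {m p : ℕ} (X : Fin n1 → Fin n2 → Fin n3 → ℝ)
    (M : Matrix (Fin n2) (Fin m) ℝ) (M' : Matrix (Fin m) (Fin p) ℝ) :
    tmul2 (tmul2 X M) M' = tmul2 X (M * M') := by
  funext i l k
  simp only [tmul2, Matrix.mul_apply, Finset.sum_mul, Finset.mul_sum, mul_assoc]
  exact Finset.sum_comm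

lemma tmul3_tmul3 {m p : ℕ} (X : Fin n1 → Fin n2 → Fin n3 → ℝ)
    (M : Matrix (Fin n3) (Fin m) ℝ) (M' : Matrix (Fin m) (Fin p) ℝ) :
    tmul3 (tmul3 X M) M' = tmul3 X (M * M') := by
  funext i j l
  simp only [tmul3, Matrix.mul_apply, Finset.sum_mul, Finset.mul_sum, mul_assoc]
  exact Finset.sum_comm

lemma tmul2_tmul1_comm {m p : ℕ} (X : Fin n1 → Fin n2 → Fin n3 → ℝ)
    (M1 : Matrix (Fin n1) (Fin m) ℝ) (M2 : Matrix (Fin n2) (Fin p) ℝ) :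
    tmul2 (tmul1 X M1) M2 = tmul1 (tmul2 X M2) M1 := by
  funext i l k
  simp only [tmul1, tmul2, Finset.sum_mul, mul_right_comm _ (M1 _ _)]
  exact Finset.sum_comm

lemma tmul3_tmul1_comm {m p : ℕ} (X : Fin n1 → Fin n2 → Fin n3 → ℝ)
    (M1 : Matrix (Fin n1) (Fin m) ℝ) (M3 : Matrix (Fin n3) (Fin p) ℝ) :
    tmul3 (tmul1 X M1) M3 = tmul1 (tmul3 X M3) M1 := by
  funext i j l
  simp only [tmul1, tmul3, Finset.sum_mul, mul_right_comm _ (M1 _ _)]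
  exact Finset.sum_comm

lemma tmul3_tmul2_comm {m p : ℕ} (X : Fin n1 → Fin n2 → Fin n3 → ℝ)
    (M2 : Matrix (Fin n2) (Fin m) ℝ) (M3 : Matrix (Fin n3) (Fin p) ℝ) :
    tmul3 (tmul2 X M2) M3 = tmul2 (tmul3 X M3) M2 := by
  funext i j l
  simp only [tmul2, tmul3, Finset.sum_mul, mul_right_comm _ (M2 _ _)]
  exact Finset.sum_comm

@[simp]
lemma tmul1_one (X : Fin n1 → Fin n2 → Fin n3 → ℝ) : tmul1 X 1 = X := by
  funext l j k
  simp [tmul1, Matrix.one_apply]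

@[simp]
lemma tmul2_one (X : Fin n1 → Fin n2 → Fin n3 → ℝ) : tmul2 X 1 = X := by
  funext i l k
  simp [tmul2, Matrix.one_apply]

@[simp]
lemma tmul3_one (X : Fin n1 → Fin n2 → Fin n3 → ℝ) : tmul3 X 1 = X := by
  funext i j l
  simp [tmul3, Matrix.one_apply]

lemma tmul1_add {m : ℕ} (X Y : Fin n1 → Fin n2 → Fin n3 → ℝ) (M : Matrix (Fin n1) (Fin m) ℝ) :
    tmul1 (X + Y) M = tmul1 X M + tmul1 Y M := by
  funext l j k
  simp only [tmul1, Pi.add_apply, add_mul, Finset.sum_add_distrib]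

lemma tmul2_add {m : ℕ} (X Y : Fin n1 → Fin n2 → Fin n3 → ℝ) (M : Matrix (Fin n2) (Fin m) ℝ) :
    tmul2 (X + Y) M = tmul2 X M + tmul2 Y M := by
  funext i l k
  simp only [tmul2, Pi.add_apply, add_mul, Finset.sum_add_distrib]

lemma tmul3_add {m : ℕ} (X Y : Fin n1 → Fin n2 → Fin n3 → ℝ) (M : Matrix (Fin n3) (Fin m) ℝ) :
    tmul3 (X + Y) M = tmul3 X M + tmul3 Y M := by
  funext i j l
  simp only [tmul3, Pi.add_apply, add_mul, Finset.sum_add_distrib]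

@[simp]
lemma tmul1_zero_left {m : ℕ} (M : Matrix (Fin n1) (Fin m) ℝ) :
    tmul1 (0 : Fin n1 → Fin n2 → Fin n3 → ℝ) M = 0 := by
  funext l j k
  simp [tmul1]

end TensorAlgebra

def modeSumCLM {N T F : ℕ} (B1 : Matrix (Fin N) (Fin N) ℝ) (B2 : Matrix (Fin T) (Fin T) ℝ)
    (B3 : Matrix (Fin F) (Fin F) ℝ) :
    (Fin N → Fin T → Fin F → ℝ) →L[ℝ] (Fin N → Fin T → Fin F → ℝ) :=
  LinearMap.toContinuousLinearMap
    { toFun := fun X => tmul1 X B1 + tmul2 X B2 + tmul3 X B3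
      map_add' := fun X Y => by
        simp only [tmul1_add, tmul2_add, tmul3_add]
        abel
      map_smul' := fun c X => by
        funext i j k
        simp only [tmul1, tmul2, tmul3, Pi.add_apply, Pi.smul_apply, smul_eq_mul,
          mul_assoc, ← Finset.mul_sum, RingHom.id_apply]
        ring }

lemma modeSumCLM_apply {N T F : ℕ} (B1 : Matrix (Fin N) (Fin N) ℝ)
    (B2 : Matrix (Fin T) (Fin T) ℝ) (B3 : Matrix (Fin F) (Fin F) ℝ)
    (X : Fin N → Fin T → Fin F → ℝ) :
    modeSumCLM B1 B2 B3 X = tmul1 X B1 + tmul2 X B2 + tmul3 X B3 := rfl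

section Calculus

variable {n1 n2 n3 m : ℕ} {t : ℝ} {X : ℝ → Fin n1 → Fin n2 → Fin n3 → ℝ}
  {X' : Fin n1 → Fin n2 → Fin n3 → ℝ}

lemma HasDerivAt.tmul1 {M : ℝ → Matrix (Fin n1) (Fin m) ℝ} {M' : Matrix (Fin n1) (Fin m) ℝ}
    (hX : HasDerivAt X X' t) (hM : ∀ a b, HasDerivAt (fun τ => M τ a b) (M' a b) t) :
    HasDerivAt (fun τ => tmul1 (X τ) (M τ)) (tmul1 X' (M t) + tmul1 (X t) M') t := by
  refine hasDerivAt_pi.2 fun l => hasDerivAt_pi.2 fun j => hasDerivAt_pi.2 fun k => ?_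
  have hXe : ∀ i, HasDerivAt (fun τ => X τ i j k) (X' i j k) t := fun i =>
    hasDerivAt_pi.1 (hasDerivAt_pi.1 (hasDerivAt_pi.1 hX i) j) k
  simpa [_root_.tmul1, Finset.sum_add_distrib] using
    HasDerivAt.fun_sum fun i _ => (hXe i).mul (hM i l)

lemma HasDerivAt.tmul2 {M : ℝ → Matrix (Fin n2) (Fin m) ℝ} {M' : Matrix (Fin n2) (Fin m) ℝ}
    (hX : HasDerivAt X X' t) (hM : ∀ a b, HasDerivAt (fun τ => M τ a b) (M' a b) t) :
    HasDerivAt (fun τ => tmul2 (X τ) (M τ)) (tmul2 X' (M t) + tmul2 (X t) M') t := by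
  refine hasDerivAt_pi.2 fun i => hasDerivAt_pi.2 fun l => hasDerivAt_pi.2 fun k => ?_
  have hXe : ∀ j, HasDerivAt (fun τ => X τ i j k) (X' i j k) t := fun j =>
    hasDerivAt_pi.1 (hasDerivAt_pi.1 (hasDerivAt_pi.1 hX i) j) k
  simpa [_root_.tmul2, Finset.sum_add_distrib] using
    HasDerivAt.fun_sum fun j _ => (hXe j).mul (hM j l)

lemma HasDerivAt.tmul3 {M : ℝ → Matrix (Fin n3) (Fin m) ℝ} {M' : Matrix (Fin n3) (Fin m) ℝ}
    (hX : HasDerivAt X X' t) (hM : ∀ a b, HasDerivAt (fun τ => M τ a b) (M' a b) t) :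
    HasDerivAt (fun τ => tmul3 (X τ) (M τ)) (tmul3 X' (M t) + tmul3 (X t) M') t := by
  refine hasDerivAt_pi.2 fun i => hasDerivAt_pi.2 fun j => hasDerivAt_pi.2 fun l => ?_
  have hXe : ∀ k, HasDerivAt (fun τ => X τ i j k) (X' i j k) t := fun k =>
    hasDerivAt_pi.1 (hasDerivAt_pi.1 (hasDerivAt_pi.1 hX i) j) k
  simpa [_root_.tmul3, Finset.sum_add_distrib] using
    HasDerivAt.fun_sum fun k _ => (hXe k).mul (hM k l)

end Calculus

section MatrixExp

attribute [local instance] Matrix.linftyOpNormedRing Matrix.linftyOpNormedAlgebra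

lemma hasDerivAt_exp_smul_apply {n : Type*} [Fintype n] [DecidableEq n]
    (B : Matrix n n ℝ) (t : ℝ) (a b : n) :
    HasDerivAt (fun τ : ℝ => NormedSpace.exp (τ • B) a b) ((NormedSpace.exp (t • B) * B) a b) t :=
  (Matrix.entryLinearMap ℝ ℝ a b).toContinuousLinearMap.hasFDerivAt.comp_hasDerivAt t
    (hasDerivAt_exp_smul_const B t)

end MatrixExp

section Duhamel

variable {V : Type*} [NormedAddCommGroup V] [NormedSpace ℝ V] [CompleteSpace V]

lemma hasDerivAt_self_add_integral_of_linear_ode {E : ℝ → V} {L : V →L[ℝ] V}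
    (hE : ∀ t, HasDerivAt E (L (E t)) t) (t : ℝ) :
    HasDerivAt (fun τ => E τ + ∫ s in (0:ℝ)..τ, E s)
      (L (E t + ∫ s in (0:ℝ)..t, E s) + E 0) t := by
  have hcont : Continuous E := Differentiable.continuous fun s => (hE s).differentiableAt
  have hFTC : ∫ s in (0:ℝ)..t, L (E s) = E t - E 0 :=
    integral_eq_sub_of_hasDerivAt (fun s _ => hE s)
      ((L.continuous.comp hcont).intervalIntegrable _ _)
  have hint : HasDerivAt (fun τ => ∫ s in (0:ℝ)..τ, E s) (E t) t :=
    integral_hasDerivAt_right (hcont.intervalIntegrable _ _) (hcont.stronglyMeasurableAtFilter _ _)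
      hcont.continuousAt
  convert (hE t).fun_add hint using 1
  rw [map_add, ← L.intervalIntegral_comp_comm (hcont.intervalIntegrable _ _), hFTC]
  abel

end Duhamel

lemma intervalIntegral_apply₃ {ι κ μ : Type*} [Fintype ι] [Fintype κ] [Fintype μ]
    {f : ℝ → ι → κ → μ → ℝ} {a b : ℝ} (hf : IntervalIntegrable f MeasureTheory.volume a b)
    (i : ι) (j : κ) (k : μ) :
    (∫ s in a..b, f s) i j k = ∫ s in a..b, f s i j k :=
  (((ContinuousLinearMap.proj (R := ℝ) (φ := fun _ : μ => ℝ) k).comp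
    ((ContinuousLinearMap.proj (φ := fun _ : κ => μ → ℝ) j).comp
      (ContinuousLinearMap.proj (φ := fun _ : ι => κ → μ → ℝ) i))).intervalIntegral_comp_comm
    hf).symm

section ExpTensor

variable {N T F : ℕ} (H0 : Fin N → Fin T → Fin F → ℝ) (B1 : Matrix (Fin N) (Fin N) ℝ)
  (B2 : Matrix (Fin T) (Fin T) ℝ) (B3 : Matrix (Fin F) (Fin F) ℝ)

lemma expTensor_zero : expTensor H0 B1 B2 B3 0 = H0 := by
  simp [expTensor, NormedSpace.exp_zero]

lemma hasDerivAt_expTensor (t : ℝ) :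
    HasDerivAt (expTensor H0 B1 B2 B3) (modeSumCLM B1 B2 B3 (expTensor H0 B1 B2 B3 t)) t := by
  have h := (((hasDerivAt_const t H0).tmul1 (hasDerivAt_exp_smul_apply B1 t)).tmul2
    (hasDerivAt_exp_smul_apply B2 t)).tmul3 (hasDerivAt_exp_smul_apply B3 t)
  refine h.congr_deriv ?_
  rw [modeSumCLM_apply, expTensor, ← tmul3_tmul1_comm, ← tmul2_tmul1_comm, tmul1_tmul1,
    ← tmul3_tmul2_comm, tmul2_tmul2, tmul3_tmul3]
  simp only [tmul1_zero_left, zero_add, tmul3_add]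

lemma solTensor_eq_add_integral (t : ℝ) :
    solTensor H0 B1 B2 B3 t =
      expTensor H0 B1 B2 B3 t + ∫ s in (0:ℝ)..t, expTensor H0 B1 B2 B3 s := by
  have hcont : Continuous (expTensor H0 B1 B2 B3) :=
    Differentiable.continuous fun s => (hasDerivAt_expTensor H0 B1 B2 B3 s).differentiableAt
  rw [solTensor]
  congr 1
  funext i j k
  rw [intervalIntegral_apply₃ (hcont.intervalIntegrable _ _),
    integral_comp_sub_left (fun s => expTensor H0 B1 B2 B3 s i j k), sub_self, sub_zero]

end ExpTensor

/-- The analytic solution satisfies `H(0) = H₀`, is differentiable, and solves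
`dH/dt = H ×₁ B₁ + H ×₂ B₂ + H ×₃ B₃ + H₀`. -/
theorem solTensor_solves_graph_ode {N T F : ℕ}
    (H0 : Fin N → Fin T → Fin F → ℝ)
    (B1 : Matrix (Fin N) (Fin N) ℝ) (B2 : Matrix (Fin T) (Fin T) ℝ)
    (B3 : Matrix (Fin F) (Fin F) ℝ) :
    solTensor H0 B1 B2 B3 0 = H0 ∧
      ∀ t : ℝ, HasDerivAt (solTensor H0 B1 B2 B3)
        (tmul1 (solTensor H0 B1 B2 B3 t) B1 + tmul2 (solTensor H0 B1 B2 B3 t) B2 +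
          tmul3 (solTensor H0 B1 B2 B3 t) B3 + H0) t := by
  refine ⟨?_, fun t => ?_⟩
  · rw [solTensor_eq_add_integral, integral_same, add_zero, expTensor_zero]
  · have h := hasDerivAt_self_add_integral_of_linear_ode (hasDerivAt_expTensor H0 B1 B2 B3) t
    simpa only [expTensor_zero, modeSumCLM_apply, ← solTensor_eq_add_integral] using h
end
end

section
/- Let H_0 ∈ ℝ^{N×T×F} be a third-order tensor and B1 ∈ ℝ^{N×N}, B2 ∈ ℝ^{T×T}, B3 ∈ ℝ^{F×F} square matrices. If H : ℝ → ℝ^{N×T×F} is differentiable, satisfies dH(t)/dt = H(t) ×_1 B1 + H(t) ×_2 B2 + H(t) ×_3 B3 + H_0 for all t, and H(0) = H_0, then for every t, H(t) = H_0 ×_1 exp(tB1) ×_2 exp(tB2) ×_3 exp(tB3) + ∫_0^t H_0 ×_1 exp((t−s)B1) ×_2 exp((t−s)B2) ×_3 exp((t−s)B3) ds. -/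
open scoped BigOperators
open Matrix intervalIntegral

noncomputable section

/-!
The right-hand side of the ODE is `L H + H₀` for the operator `L X = X ×₁ B₁ + X ×₂ B₂ + X ×₃ B₃`.
The three mode products act on different indices, so they commute, and `exp (τ L)` factors as
the product of the three mode products with `exp (τ Bᵢ)`; hence `exp (τ L) H₀` is the tensor
`H₀ ×₁ exp(τB₁) ×₂ exp(τB₂) ×₃ exp(τB₃)`. For any solution of `H' = L H + b` the integrating
factor gives `(exp (-t L) H t)' = exp (-t L) b`, and integrating from `0` to `t` yields
Duhamel's formula `H t = exp (t L) H 0 + ∫₀ᵗ exp ((t - s) L) b ds`.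
-/

open NormedSpace MeasureTheory

section Duhamel

variable {E : Type*} [NormedAddCommGroup E] [NormedSpace ℝ E] [CompleteSpace E]

theorem ContinuousLinearMap.exp_add_of_commute {L M : E →L[ℝ] E} (h : Commute L M) :
    exp (L + M) = exp L * exp M :=
  letI := NormedAlgebra.restrictScalars ℚ ℝ (E →L[ℝ] E)
  NormedSpace.exp_add_of_commute h

theorem ContinuousLinearMap.exp_smul_apply_exp_smul_apply (L : E →L[ℝ] E) (s t : ℝ) (v : E) :
    exp (s • L) (exp (t • L) v) = exp ((s + t) • L) v := by
  rw [add_smul, exp_add_of_commute (((Commute.refl L).smul_left s).smul_right t)]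
  rfl

theorem hasDerivAt_exp_neg_smul_apply {x : ℝ → E} (L : E →L[ℝ] E) {v : E} {t : ℝ}
    (hx : HasDerivAt x (L (x t) + v) t) :
    HasDerivAt (fun s => exp ((-s) • L) (x s)) (exp ((-t) • L) v) t := by
  have hexp : HasDerivAt (fun s : ℝ => exp ((-s) • L)) (-(exp ((-t) • L) * L)) t := by
    simpa [Function.comp_def] using (hasDerivAt_exp_smul_const L (-t)).scomp t (hasDerivAt_neg t)
  convert hexp.clm_apply hx using 1
  simp

theorem eq_exp_smul_apply_add_integral_of_hasDerivAt {x : ℝ → E} (L : E →L[ℝ] E) (b : E)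
    (hx : ∀ t, HasDerivAt x (L (x t) + b) t) (t : ℝ) :
    x t = exp (t • L) (x 0) + ∫ s in (0 : ℝ)..t, exp ((t - s) • L) b := by
  have hcont : Continuous fun s : ℝ => exp (s • L) := (differentiable_exp_smul_const ℝ L).continuous
  have hint : IntervalIntegrable (fun s : ℝ => exp ((-s) • L) b) volume 0 t :=
    ((hcont.comp continuous_neg).clm_apply continuous_const).intervalIntegrable 0 t
  have hftc : exp ((-t) • L) (x t) = x 0 + ∫ s in (0 : ℝ)..t, exp ((-s) • L) b := by
    rw [intervalIntegral.integral_eq_sub_of_hasDerivAt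
      (fun s _ => hasDerivAt_exp_neg_smul_apply L (hx s)) hint]
    simp
  calc x t = exp (t • L) (exp ((-t) • L) (x t)) := by
        rw [L.exp_smul_apply_exp_smul_apply, add_neg_cancel, zero_smul, exp_zero]
        rfl
    _ = exp (t • L) (x 0) + ∫ s in (0 : ℝ)..t, exp (t • L) (exp ((-s) • L) b) := by
        rw [hftc, map_add, (exp (t • L)).intervalIntegral_comp_comm hint]
    _ = exp (t • L) (x 0) + ∫ s in (0 : ℝ)..t, exp ((t - s) • L) b := by
        simp_rw [L.exp_smul_apply_exp_smul_apply, sub_eq_add_neg]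

end Duhamel

theorem intervalIntegral.integral_pi_apply {ι : Type*} {E : ι → Type*} [Fintype ι]
    [∀ i, NormedAddCommGroup (E i)] [∀ i, NormedSpace ℝ (E i)] [∀ i, CompleteSpace (E i)]
    {f : ℝ → ∀ i, E i} {a b : ℝ}
    (hf : IntervalIntegrable f volume a b) (i : ι) :
    (∫ s in a..b, f s) i = ∫ s in a..b, f s i :=
  ((ContinuousLinearMap.proj (R := ℝ) (φ := E) i).intervalIntegral_comp_comm hf).symm

section MatrixExp

variable {n : Type*} [Fintype n] [DecidableEq n] {A : Type*} [NormedRing A] [NormedAlgebra ℝ A]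

theorem Matrix.map_exp_of_algHom (φ : Matrix n n ℝ →ₐ[ℝ] A) (M : Matrix n n ℝ) :
    φ (exp M) = exp (φ M) :=
  -- `exp` on matrices needs no norm; one is chosen only to apply `map_exp`
  letI : NormedRing (Matrix n n ℝ) := Matrix.linftyOpNormedRing
  letI : NormedAlgebra ℝ (Matrix n n ℝ) := Matrix.linftyOpNormedAlgebra
  letI : NormedAlgebra ℚ (Matrix n n ℝ) := Matrix.linftyOpNormedAlgebra
  letI : NormedAlgebra ℚ A := NormedAlgebra.restrictScalars ℚ ℝ A
  map_exp φ φ.toLinearMap.continuous_of_finiteDimensional M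

end MatrixExp

abbrev Tensor3 (N T F : ℕ) := Fin N → Fin T → Fin F → ℝ

section ModeProduct

variable {N T F : ℕ} (X : Tensor3 N T F)

theorem tmul1_one_s13 : tmul1 X 1 = X := by
  funext l j k; simp [tmul1, one_apply]

theorem tmul2_one_s13 : tmul2 X 1 = X := by
  funext i l k; simp [tmul2, one_apply]

theorem tmul3_one_s13 : tmul3 X 1 = X := by
  funext i j l; simp [tmul3, one_apply]

theorem tmul1_tmul1_s13 (A B : Matrix (Fin N) (Fin N) ℝ) : tmul1 (tmul1 X A) B = tmul1 X (A * B) := by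
  funext l j k
  simp only [tmul1, mul_apply, Finset.sum_mul, Finset.mul_sum, mul_assoc]
  exact Finset.sum_comm

theorem tmul2_tmul2_s13 (A B : Matrix (Fin T) (Fin T) ℝ) : tmul2 (tmul2 X A) B = tmul2 X (A * B) := by
  funext i l k
  simp only [tmul2, mul_apply, Finset.sum_mul, Finset.mul_sum, mul_assoc]
  exact Finset.sum_comm

theorem tmul3_tmul3_s13 (A B : Matrix (Fin F) (Fin F) ℝ) : tmul3 (tmul3 X A) B = tmul3 X (A * B) := by
  funext i j l
  simp only [tmul3, mul_apply, Finset.sum_mul, Finset.mul_sum, mul_assoc]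
  exact Finset.sum_comm

theorem tmul2_tmul1_comm_s13 (A : Matrix (Fin N) (Fin N) ℝ) (B : Matrix (Fin T) (Fin T) ℝ) :
    tmul2 (tmul1 X A) B = tmul1 (tmul2 X B) A := by
  funext i j k
  simp only [tmul1, tmul2, Finset.sum_mul, mul_right_comm _ (A _ _)]
  exact Finset.sum_comm

theorem tmul3_tmul1_comm_s13 (A : Matrix (Fin N) (Fin N) ℝ) (B : Matrix (Fin F) (Fin F) ℝ) :
    tmul3 (tmul1 X A) B = tmul1 (tmul3 X B) A := by
  funext i j k
  simp only [tmul1, tmul3, Finset.sum_mul, mul_right_comm _ (A _ _)]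
  exact Finset.sum_comm

theorem tmul3_tmul2_comm_s13 (A : Matrix (Fin T) (Fin T) ℝ) (B : Matrix (Fin F) (Fin F) ℝ) :
    tmul3 (tmul2 X A) B = tmul2 (tmul3 X B) A := by
  funext i j k
  simp only [tmul2, tmul3, Finset.sum_mul, mul_right_comm _ (A _ _)]
  exact Finset.sum_comm

end ModeProduct

section ModeOperator

variable {N T F : ℕ}

/- `X ↦ X ×ₖ M` reverses products (`X ×ₖ M ×ₖ M' = X ×ₖ (M M')`), hence the transposes. -/
def mode1Hom : Matrix (Fin N) (Fin N) ℝ →ₐ[ℝ] (Tensor3 N T F →L[ℝ] Tensor3 N T F) :=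
  AlgHom.ofLinearMap
    (LinearMap.toContinuousLinearMap.toLinearMap ∘ₗ
      LinearMap.mk₂ ℝ (fun M X => tmul1 X Mᵀ)
        (by intros; funext; simp [tmul1, mul_add, Finset.sum_add_distrib])
        (by intros; funext; simp [tmul1, Finset.mul_sum, mul_left_comm])
        (by intros; funext; simp [tmul1, add_mul, Finset.sum_add_distrib])
        (by intros; funext; simp [tmul1, Finset.mul_sum, mul_assoc]))
    (by ext X : 1; exact (congrArg _ transpose_one).trans (tmul1_one_s13 X))
    (fun A B => by
      ext X : 1
      exact (congrArg _ (transpose_mul A B)).trans (tmul1_tmul1_s13 X Bᵀ Aᵀ).symm)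

theorem mode1Hom_apply (M : Matrix (Fin N) (Fin N) ℝ) (X : Tensor3 N T F) :
    mode1Hom M X = tmul1 X Mᵀ :=
  rfl

def mode2Hom : Matrix (Fin T) (Fin T) ℝ →ₐ[ℝ] (Tensor3 N T F →L[ℝ] Tensor3 N T F) :=
  AlgHom.ofLinearMap
    (LinearMap.toContinuousLinearMap.toLinearMap ∘ₗ
      LinearMap.mk₂ ℝ (fun M X => tmul2 X Mᵀ)
        (by intros; funext; simp [tmul2, mul_add, Finset.sum_add_distrib])
        (by intros; funext; simp [tmul2, Finset.mul_sum, mul_left_comm])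
        (by intros; funext; simp [tmul2, add_mul, Finset.sum_add_distrib])
        (by intros; funext; simp [tmul2, Finset.mul_sum, mul_assoc]))
    (by ext X : 1; exact (congrArg _ transpose_one).trans (tmul2_one_s13 X))
    (fun A B => by
      ext X : 1
      exact (congrArg _ (transpose_mul A B)).trans (tmul2_tmul2_s13 X Bᵀ Aᵀ).symm)

theorem mode2Hom_apply (M : Matrix (Fin T) (Fin T) ℝ) (X : Tensor3 N T F) :
    mode2Hom M X = tmul2 X Mᵀ :=
  rfl

def mode3Hom : Matrix (Fin F) (Fin F) ℝ →ₐ[ℝ] (Tensor3 N T F →L[ℝ] Tensor3 N T F) :=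
  AlgHom.ofLinearMap
    (LinearMap.toContinuousLinearMap.toLinearMap ∘ₗ
      LinearMap.mk₂ ℝ (fun M X => tmul3 X Mᵀ)
        (by intros; funext; simp [tmul3, mul_add, Finset.sum_add_distrib])
        (by intros; funext; simp [tmul3, Finset.mul_sum, mul_left_comm])
        (by intros; funext; simp [tmul3, add_mul, Finset.sum_add_distrib])
        (by intros; funext; simp [tmul3, Finset.mul_sum, mul_assoc]))
    (by ext X : 1; exact (congrArg _ transpose_one).trans (tmul3_one_s13 X))
    (fun A B => by
      ext X : 1
      exact (congrArg _ (transpose_mul A B)).trans (tmul3_tmul3_s13 X Bᵀ Aᵀ).symm)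

theorem mode3Hom_apply (M : Matrix (Fin F) (Fin F) ℝ) (X : Tensor3 N T F) :
    mode3Hom M X = tmul3 X Mᵀ :=
  rfl

theorem commute_mode1Hom_mode2Hom (A : Matrix (Fin N) (Fin N) ℝ)
    (B : Matrix (Fin T) (Fin T) ℝ) :
    Commute (mode1Hom A : Tensor3 N T F →L[ℝ] Tensor3 N T F) (mode2Hom B) :=
  ContinuousLinearMap.ext fun X => (tmul2_tmul1_comm_s13 X Aᵀ Bᵀ).symm

theorem commute_mode1Hom_mode3Hom (A : Matrix (Fin N) (Fin N) ℝ)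
    (B : Matrix (Fin F) (Fin F) ℝ) :
    Commute (mode1Hom A : Tensor3 N T F →L[ℝ] Tensor3 N T F) (mode3Hom B) :=
  ContinuousLinearMap.ext fun X => (tmul3_tmul1_comm_s13 X Aᵀ Bᵀ).symm

theorem commute_mode2Hom_mode3Hom (A : Matrix (Fin T) (Fin T) ℝ)
    (B : Matrix (Fin F) (Fin F) ℝ) :
    Commute (mode2Hom A : Tensor3 N T F →L[ℝ] Tensor3 N T F) (mode3Hom B) :=
  ContinuousLinearMap.ext fun X => (tmul3_tmul2_comm_s13 X Aᵀ Bᵀ).symm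

variable (B1 : Matrix (Fin N) (Fin N) ℝ) (B2 : Matrix (Fin T) (Fin T) ℝ)
  (B3 : Matrix (Fin F) (Fin F) ℝ)

def modeOperator : Tensor3 N T F →L[ℝ] Tensor3 N T F :=
  mode1Hom B1ᵀ + mode2Hom B2ᵀ + mode3Hom B3ᵀ

theorem modeOperator_apply (X : Tensor3 N T F) :
    modeOperator B1 B2 B3 X = tmul1 X B1 + tmul2 X B2 + tmul3 X B3 := by
  simp [modeOperator, mode1Hom_apply, mode2Hom_apply, mode3Hom_apply]

theorem exp_smul_modeOperator_apply (τ : ℝ) (X : Tensor3 N T F) :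
    exp (τ • modeOperator B1 B2 B3) X = expTensor X B1 B2 B3 τ := by
  set L1 : Tensor3 N T F →L[ℝ] Tensor3 N T F := mode1Hom (τ • B1ᵀ)
  set L2 : Tensor3 N T F →L[ℝ] Tensor3 N T F := mode2Hom (τ • B2ᵀ)
  set L3 : Tensor3 N T F →L[ℝ] Tensor3 N T F := mode3Hom (τ • B3ᵀ)
  have hsum : τ • modeOperator B1 B2 B3 = L3 + L2 + L1 := by
    simp only [L1, L2, L3, modeOperator, map_smul, smul_add]
    abel
  rw [hsum, ContinuousLinearMap.exp_add_of_commute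
      ((commute_mode1Hom_mode3Hom _ _).symm.add_left (commute_mode1Hom_mode2Hom _ _).symm),
    ContinuousLinearMap.exp_add_of_commute (commute_mode2Hom_mode3Hom _ _).symm,
    ← map_exp_of_algHom, ← map_exp_of_algHom, ← map_exp_of_algHom]
  show tmul3 (tmul2 (tmul1 X (exp (τ • B1ᵀ))ᵀ) (exp (τ • B2ᵀ))ᵀ) (exp (τ • B3ᵀ))ᵀ = _
  simp only [← transpose_smul, ← exp_transpose, transpose_transpose]
  rfl

end ModeOperator

/-- Any differentiable solution of the tensor ODE
`dH/dt = H ×₁ B₁ + H ×₂ B₂ + H ×₃ B₃ + H₀` with `H(0) = H₀` is given by the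
analytic formula
`H(t) = H₀ ×₁ e^{tB₁} ×₂ e^{tB₂} ×₃ e^{tB₃}
  + ∫₀^t H₀ ×₁ e^{(t−s)B₁} ×₂ e^{(t−s)B₂} ×₃ e^{(t−s)B₃} ds`. -/
theorem graph_ode_solution_unique {N T F : ℕ}
    (H0 : Fin N → Fin T → Fin F → ℝ)
    (B1 : Matrix (Fin N) (Fin N) ℝ) (B2 : Matrix (Fin T) (Fin T) ℝ)
    (B3 : Matrix (Fin F) (Fin F) ℝ)
    (H : ℝ → (Fin N → Fin T → Fin F → ℝ))
    (hODE : ∀ t : ℝ, HasDerivAt H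
      (tmul1 (H t) B1 + tmul2 (H t) B2 + tmul3 (H t) B3 + H0) t)
    (hinit : H 0 = H0) :
    ∀ t : ℝ, H t = expTensor H0 B1 B2 B3 t +
      fun i j k => ∫ s in (0:ℝ)..t, expTensor H0 B1 B2 B3 (t - s) i j k := by
  intro t
  set L := modeOperator B1 B2 B3
  have hL : ∀ s, HasDerivAt H (L (H s) + H0) s := by
    simpa only [L, modeOperator_apply] using hODE
  have hG : Continuous fun s => exp ((t - s) • L) H0 :=
    ((differentiable_exp_smul_const ℝ L).continuous.comp (by fun_prop)).clm_apply continuous_const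
  rw [eq_exp_smul_apply_add_integral_of_hasDerivAt L H0 hL t, hinit, exp_smul_modeOperator_apply]
  congr 1
  funext i j k
  have hGi : Continuous fun s => exp ((t - s) • L) H0 i := (continuous_apply i).comp hG
  have hGij : Continuous fun s => exp ((t - s) • L) H0 i j := (continuous_apply j).comp hGi
  rw [integral_pi_apply (hG.intervalIntegrable 0 t),
    integral_pi_apply (hGi.intervalIntegrable 0 t), integral_pi_apply (hGij.intervalIntegrable 0 t)]
  simp only [L, exp_smul_modeOperator_apply]
end
end
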